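/- (Isolated cartesian product theorem) Let Q be a simple binary join query whose relations have total size m, G the hypergraph defined by Q, H ⊆ attset(Q) arbitrary, and I the set of isolated vertices. For any fractional edge packing W of G, Σ_{η ∈ config(Q, H)} |Join(Q''_isolated(η))| ≤ λ^{|H| − W_I} · m^{|I|}, where W_I = Σ_{Y ∈ I} (weight of Y under W). -/

import Mathlib

open scoped BigOperators Classical

namespace BinaryJoins

/-! ### Hypergraphs, fractional edge coverings and packings

A hypergraph is given by a finite vertex set `V : Finset α` and a finite
edge set `E : Finset (Finset α)`.  A weight assignment is a function
`W : Finset α → ℝ` (only its values on `E` matter). -/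

variable {α : Type} [DecidableEq α]

/-- The weight of a vertex `X`: the sum of the weights of all edges incident to `X`. -/
def vertexWeight (E : Finset (Finset α)) (W : Finset α → ℝ) (X : α) : ℝ :=
  ∑ e ∈ E.filter (fun e => X ∈ e), W e

/-- `W` is a fractional edge covering: edge weights lie in `[0,1]` and every
vertex of `V` has weight at least 1. -/
def IsFracEdgeCover (V : Finset α) (E : Finset (Finset α)) (W : Finset α → ℝ) : Prop :=
  (∀ e ∈ E, 0 ≤ W e ∧ W e ≤ 1) ∧ ∀ X ∈ V, 1 ≤ vertexWeight E W X

/-- `W` is a fractional edge packing: edge weights lie in `[0,1]` and every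
vertex of `V` has weight at most 1. -/
def IsFracEdgePack (V : Finset α) (E : Finset (Finset α)) (W : Finset α → ℝ) : Prop :=
  (∀ e ∈ E, 0 ≤ W e ∧ W e ≤ 1) ∧ ∀ X ∈ V, vertexWeight E W X ≤ 1

/-- The fractional edge covering number `ρ`: the smallest total weight of a
fractional edge covering. -/
noncomputable def rho (V : Finset α) (E : Finset (Finset α)) : ℝ :=
  sInf {t | ∃ W : Finset α → ℝ, IsFracEdgeCover V E W ∧ t = ∑ e ∈ E, W e}

/-- The fractional edge packing number `τ`: the largest total weight of a
fractional edge packing. -/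
noncomputable def tau (V : Finset α) (E : Finset (Finset α)) : ℝ :=
  sSup {t | ∃ W : Finset α → ℝ, IsFracEdgePack V E W ∧ t = ∑ e ∈ E, W e}

/-- A binary hypergraph: every edge is a 2-element subset of `V`, and every
vertex is incident to at least one edge. -/
def BinaryHG (V : Finset α) (E : Finset (Finset α)) : Prop :=
  (∀ e ∈ E, e ⊆ V ∧ e.card = 2) ∧ ∀ X ∈ V, ∃ e ∈ E, X ∈ e


/-! ### Tuples, relations, and join queries

`dom` is the domain of values; a tuple over a set `U` of attributes is
represented as a function `att → Option dom` that is `some`-valued exactly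
on `U`. -/

variable {att dom : Type}

/-- A (partial) tuple. -/
abbrev Tup (att dom : Type) := att → Option dom

/-- `u` is a tuple over the attribute set `U`. -/
def IsTupleOn (u : Tup att dom) (U : Set att) : Prop :=
  ∀ x : att, (u x).isSome ↔ x ∈ U

/-- The projection (restriction) of a tuple on an attribute set `V`. -/
noncomputable def restrict (u : Tup att dom) (V : Set att) : Tup att dom :=
  fun x => if x ∈ V then u x else none

/-- A relation: a finite set of tuples over a common scheme. -/
structure Relation (att dom : Type) where
  scheme : Finset att
  tuples : Set (Tup att dom)
  finite : tuples.Finite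
  wf : ∀ u ∈ tuples, IsTupleOn u ↑scheme

variable [DecidableEq att]

/-- A join query is a finite set of relations; `attset Q` is the set of all
attributes appearing in the schemes of its relations. -/
def attset (Q : Finset (Relation att dom)) : Finset att :=
  Q.biUnion fun R => R.scheme

/-- The result `Join(Q)` of a join query. -/
def JoinQ (Q : Finset (Relation att dom)) : Set (Tup att dom) :=
  { u | IsTupleOn u ↑(attset Q) ∧ ∀ R ∈ Q, restrict u ↑R.scheme ∈ R.tuples }

/-- A query is simple if no two distinct relations share a scheme. -/
def SimpleQ (Q : Finset (Relation att dom)) : Prop :=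
  ∀ R ∈ Q, ∀ S ∈ Q, R.scheme = S.scheme → R = S

/-- A query is binary if every relation's scheme has exactly two attributes. -/
def BinaryQ (Q : Finset (Relation att dom)) : Prop :=
  ∀ R ∈ Q, R.scheme.card = 2

/-- The input size `m` of a query. -/
noncomputable def inputSize (Q : Finset (Relation att dom)) : ℕ :=
  ∑ R ∈ Q, R.tuples.ncard

/-- The edge set of the hypergraph defined by `Q` (its vertex set is `attset Q`). -/
def edgeSet (Q : Finset (Relation att dom)) : Finset (Finset att) :=
  Q.image fun R => R.scheme

/-! ### Heavy and light values -/

/-- Value `x` is heavy on attribute `X`: some relation of `Q` has at least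
`m/λ` tuples carrying `x` on `X`. -/
def HeavyOn (Q : Finset (Relation att dom)) (lam : ℕ) (X : att) (x : dom) : Prop :=
  ∃ R ∈ Q, X ∈ R.scheme ∧
    (inputSize Q : ℝ) / (lam : ℝ) ≤ ({u ∈ R.tuples | u X = some x}.ncard : ℝ)

/-- Value `x` is heavy (on some attribute). -/
def Heavy (Q : Finset (Relation att dom)) (lam : ℕ) (x : dom) : Prop :=
  ∃ X : att, HeavyOn Q lam X x

/-- Value `x` appears in at least one relation of `Q`. -/
def Appears (Q : Finset (Relation att dom)) (x : dom) : Prop :=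
  ∃ R ∈ Q, ∃ X ∈ R.scheme, ∃ u ∈ R.tuples, u X = some x

/-- Value `x` appears on attribute `Y` in a relation of `Q`. -/
def AppearsOn (Q : Finset (Relation att dom)) (Y : att) (x : dom) : Prop :=
  ∃ R ∈ Q, Y ∈ R.scheme ∧ ∃ u ∈ R.tuples, u Y = some x

/-! ### Configurations and residual queries

Below, `Hv : att → dom → Prop` is the "heavy" predicate (`Hv X x` meaning
that value `x` is heavy on attribute `X`); in applications it is
instantiated with `HeavyOn Q lam`. -/

/-- The set `config(Q, H)` of configurations of `H`: tuples over `H` whose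
values are heavy. -/
def config (Hv : att → dom → Prop) (H : Finset att) : Set (Tup att dom) :=
  { η | IsTupleOn η ↑H ∧ ∀ X ∈ H, ∀ x : dom, η X = some x → Hv X x }

/-- The residual relation `R'ₑ(η)` (over `e \ H`) of the relation `R` with
scheme `e`, under configuration `η` of `H`: projections on `e \ H` of the
tuples of `R` that agree with `η` on `e ∩ H` and are light outside `H`. -/
def ResidualTuples (Q : Finset (Relation att dom)) (Hv : att → dom → Prop)
    (H : Finset att) (η : Tup att dom) (R : Relation att dom) : Set (Tup att dom) :=
  { v | ∃ w ∈ R.tuples,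
      (∀ X ∈ R.scheme ∩ H, w X = η X) ∧
      (∀ Y ∈ R.scheme \ H, ∀ y : dom, w Y = some y → ¬ Hv Y y ∧ Appears Q y) ∧
      v = restrict w ↑(R.scheme \ H) }

/-- The result of the residual query `Q'(η)`: tuples over `attset Q \ H`
whose projection on each active edge `e` belongs to `R'ₑ(η)`. -/
def JoinResidual (Q : Finset (Relation att dom)) (Hv : att → dom → Prop)
    (H : Finset att) (η : Tup att dom) : Set (Tup att dom) :=
  { u | IsTupleOn u ↑(attset Q \ H) ∧
      ∀ R ∈ Q, (R.scheme \ H).Nonempty →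
        restrict u ↑(R.scheme \ H) ∈ ResidualTuples Q Hv H η R }

/-- `m_η`: the total size of the relations of the residual query `Q'(η)`. -/
noncomputable def residualSize (Q : Finset (Relation att dom)) (Hv : att → dom → Prop)
    (H : Finset att) (η : Tup att dom) : ℕ :=
  ∑ R ∈ Q, if (R.scheme \ H).Nonempty then (ResidualTuples Q Hv H η R).ncard else 0

/-- Combine a tuple over a set disjoint from `H` with a configuration `η` over `H`. -/
def combine (H : Finset att) (η u : Tup att dom) : Tup att dom :=
  fun x => if x ∈ H then η x else u x

/-! ### Cross edges, isolated attributes, and the semi-join reduction -/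

/-- `e` is a cross edge w.r.t. `H`: it meets both `H` and its complement. -/
def IsCross (H : Finset att) (e : Finset att) : Prop :=
  (e ∩ H).Nonempty ∧ (e \ H).Nonempty

/-- The set `I` of isolated attributes: light attributes `X` such that `{X}`
is the only edge incident to `X` in the subgraph induced by the light
attributes `L = attset Q \ H`. -/
def isolatedSet (Q : Finset (Relation att dom)) (H : Finset att) : Finset att :=
  (attset Q \ H).filter fun X => ∀ R ∈ Q, X ∈ R.scheme → R.scheme \ H = {X}

/-- The unary tuple over `{X}` carrying value `x`. -/
def singletonTup (X : att) (x : dom) : Tup att dom :=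
  fun Y => if Y = X then some x else none

/-- `X` is a border attribute: a light attribute appearing in a cross edge. -/
def BorderAttr (Q : Finset (Relation att dom)) (H : Finset att) (X : att) : Prop :=
  X ∈ attset Q ∧ X ∉ H ∧ ∃ R ∈ Q, X ∈ R.scheme ∧ IsCross H R.scheme

/-- The set of values of the unary relation `R''_X(η)`: the intersection of
the residual relations `R'ₑ(η)` over all cross edges `e` containing `X`. -/
def Rpp (Q : Finset (Relation att dom)) (Hv : att → dom → Prop)
    (H : Finset att) (η : Tup att dom) (X : att) : Set dom :=
  { x | ∀ R ∈ Q, IsCross H R.scheme → X ∈ R.scheme →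
      singletonTup X x ∈ ResidualTuples Q Hv H η R }

/-- The cartesian product `Join(Q''_J(η))` of the unary relations `R''_X(η)`,
`X ∈ J` (for `J = I` this is `Join(Q''_isolated(η))`). -/
def JoinIso (Q : Finset (Relation att dom)) (Hv : att → dom → Prop)
    (H : Finset att) (η : Tup att dom) (J : Finset att) : Set (Tup att dom) :=
  { u | IsTupleOn u ↑J ∧ ∀ X ∈ J, ∀ x : dom, u X = some x → x ∈ Rpp Q Hv H η X }

/-! ### The query `Q*` and its hypergraph -/

/-- The result `Join(Q*)` of the query `Q*`: tuples over `I ∪ H` that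
(i) project into `R_e` for every cross edge `e` incident to `I`, (ii) take a
heavy value on every attribute of `H`, and (iii) take, on every `Y ∈ I`, a
value appearing on `Y` in a relation of `Q`. -/
def JoinStar (Q : Finset (Relation att dom)) (Hv : att → dom → Prop)
    (H : Finset att) : Set (Tup att dom) :=
  { t | IsTupleOn t ↑(isolatedSet Q H ∪ H) ∧
      (∀ R ∈ Q, IsCross H R.scheme → (R.scheme ∩ isolatedSet Q H).Nonempty →
        restrict t ↑R.scheme ∈ R.tuples) ∧
      (∀ X ∈ H, ∀ x : dom, t X = some x → Hv X x) ∧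
      (∀ Y ∈ isolatedSet Q H, ∀ y : dom, t Y = some y → AppearsOn Q Y y) }

/-- The edge set `E*` of the hypergraph `G*` of `Q*`: the cross edges of `G`
incident to `I`, a unary edge `{X}` for each `X ∈ H`, and a unary edge `{Y}`
for each `Y ∈ I`.  (Its vertex set is `V* = I ∪ H`.) -/
noncomputable def starEdges (Q : Finset (Relation att dom)) (H : Finset att) :
    Finset (Finset att) :=
  (edgeSet Q).filter (fun e => IsCross H e ∧ (e ∩ isolatedSet Q H).Nonempty)
    ∪ H.image (fun X => {X}) ∪ (isolatedSet Q H).image (fun Y => {Y})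

/-! ### The reduced query `Q''(η)` -/

/-- The reduced relation `R''ₑ(η)` of a light edge `e = scheme R`: the tuples
of `R'ₑ(η)` whose values on border attributes survive the semi-join
reduction. -/
def ReducedTuples (Q : Finset (Relation att dom)) (Hv : att → dom → Prop)
    (H : Finset att) (η : Tup att dom) (R : Relation att dom) : Set (Tup att dom) :=
  { u | u ∈ ResidualTuples Q Hv H η R ∧
      ∀ X ∈ R.scheme, BorderAttr Q H X → ∀ x : dom, u X = some x → x ∈ Rpp Q Hv H η X }

/-- The result `Join(Q''_light(η))`: tuples over `L \ I` whose projection on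
every light edge belongs to the corresponding reduced relation. -/
def JoinLight (Q : Finset (Relation att dom)) (Hv : att → dom → Prop)
    (H : Finset att) (η : Tup att dom) : Set (Tup att dom) :=
  { u | IsTupleOn u ↑((attset Q \ H) \ isolatedSet Q H) ∧
      ∀ R ∈ Q, R.scheme ∩ H = ∅ → restrict u ↑R.scheme ∈ ReducedTuples Q Hv H η R }

/-- The result `Join(Q''(η))` of the reduced query: tuples over `L` whose
projections on light edges are in the reduced relations and whose values on
isolated attributes are in the corresponding unary relations. -/
def JoinReduced (Q : Finset (Relation att dom)) (Hv : att → dom → Prop)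
    (H : Finset att) (η : Tup att dom) : Set (Tup att dom) :=
  { u | IsTupleOn u ↑(attset Q \ H) ∧
      (∀ R ∈ Q, R.scheme ∩ H = ∅ → restrict u ↑R.scheme ∈ ReducedTuples Q Hv H η R) ∧
      (∀ X ∈ isolatedSet Q H, ∀ x : dom, u X = some x → x ∈ Rpp Q Hv H η X) }

end BinaryJoins

/-
For a fixed configuration `η`, an isolated attribute `X` lies only in cross edges `{X, Z}` with
`Z ∈ H`, so `|R''_X(η)|` is at most `m` and at most the degree of `η(Z)` in `R_{XZ}`.
Interpolating these bounds with the weights of the packing gives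
`|Join(Q''_isolated(η))| ≤ m^{|I| - W_I} · ∏ deg^W`. Summed over `η`, the right-hand side
factorises over `Z ∈ H`, and Hölder's inequality over the at most `λ` heavy values of `Z` bounds
the factor of `Z` by `λ^{1 - w_Z} m^{w_Z}`, where `w_Z` is the weight of the edges joining `Z` to
`I`; these add up to `W_I`.
-/

open MeasureTheory in
/-- Hölder's inequality for finitely many functions on a finite set, with the missing weight
`1 - ∑ w` carried by the constant function `1`. -/
theorem Real.sum_prod_rpow_le_card_rpow_mul_prod_sum_rpow {ι κ : Type*} (s : Finset ι)
    (t : Finset κ) {w : ι → ℝ} {f : ι → κ → ℝ} (hw : ∀ i ∈ s, 0 ≤ w i)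
    (hw1 : ∑ i ∈ s, w i ≤ 1) (hf : ∀ i ∈ s, ∀ k ∈ t, 0 ≤ f i k) :
    ∑ k ∈ t, ∏ i ∈ s, f i k ^ w i
      ≤ (t.card : ℝ) ^ (1 - ∑ i ∈ s, w i) * ∏ i ∈ s, (∑ k ∈ t, f i k) ^ w i := by
  let _ : MeasurableSpace κ := ⊤
  have hmeas : ∀ g : κ → ENNReal, Measurable g := fun _ _ _ => MeasurableSpace.measurableSet_top
  have hint : ∀ g : κ → ENNReal, ∫⁻ k, g k ∂(∑ k ∈ t, Measure.dirac k) = ∑ k ∈ t, g k := by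
    intro g
    rw [lintegral_finsetSum_measure]
    exact Finset.sum_congr rfl fun k _ => lintegral_dirac' k (hmeas g)
  have key := ENNReal.lintegral_mul_prod_norm_pow_le (μ := ∑ k ∈ t, Measure.dirac k) s
    (g := fun _ => 1) (f := fun i k => ENNReal.ofReal (f i k))
    aemeasurable_const (fun i _ => (hmeas _).aemeasurable) (1 - ∑ i ∈ s, w i) (by ring)
    (by linarith) hw
  simp only [hint, ENNReal.one_rpow, one_mul, Finset.sum_const, nsmul_eq_mul, mul_one] at key
  have hF : ∀ i ∈ s, 0 ≤ ∑ k ∈ t, f i k := fun i hi => Finset.sum_nonneg (hf i hi)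
  rw [← ENNReal.ofReal_le_ofReal_iff (mul_nonneg (by positivity)
      (Finset.prod_nonneg fun i hi => Real.rpow_nonneg (hF i hi) _)),
    ENNReal.ofReal_sum_of_nonneg
      (fun k hk => Finset.prod_nonneg fun i hi => Real.rpow_nonneg (hf i hi k hk) _),
    ENNReal.ofReal_mul (by positivity),
    ENNReal.ofReal_prod_of_nonneg (fun i hi => Real.rpow_nonneg (hF i hi) _)]
  convert key using 2 with k hk
  · rw [ENNReal.ofReal_prod_of_nonneg (fun i hi => Real.rpow_nonneg (hf i hi k hk) _)]
    exact Finset.prod_congr rfl fun i hi =>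
      (ENNReal.ofReal_rpow_of_nonneg (hf i hi k hk) (hw i hi)).symm
  · rw [← ENNReal.ofReal_natCast, ENNReal.ofReal_rpow_of_nonneg (by positivity) (by linarith)]
  · refine Finset.prod_congr rfl fun i hi => ?_
    rw [← ENNReal.ofReal_sum_of_nonneg (hf i hi),
      ENNReal.ofReal_rpow_of_nonneg (hF i hi) (hw i hi)]

theorem Real.le_rpow_mul_prod_rpow {ι : Type*} {s : Finset ι} {w b : ι → ℝ} {a c : ℝ}
    (ha : 0 ≤ a) (hac : a ≤ c) (hab : ∀ i ∈ s, a ≤ b i) (hw : ∀ i ∈ s, 0 ≤ w i)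
    (hw1 : ∑ i ∈ s, w i ≤ 1) :
    a ≤ c ^ (1 - ∑ i ∈ s, w i) * ∏ i ∈ s, b i ^ w i := by
  rcases ha.eq_or_lt with rfl | ha
  · exact mul_nonneg (Real.rpow_nonneg hac _)
      (Finset.prod_nonneg fun i hi => Real.rpow_nonneg (hab i hi) _)
  calc a = a ^ (1 - ∑ i ∈ s, w i) * ∏ i ∈ s, a ^ w i := by
        rw [← Real.rpow_sum_of_pos ha, ← Real.rpow_add ha, sub_add_cancel, Real.rpow_one]
    _ ≤ c ^ (1 - ∑ i ∈ s, w i) * ∏ i ∈ s, b i ^ w i := by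
        gcongr ?_ * ∏ i ∈ s, ?_ with i hi
        · exact Real.rpow_nonneg (ha.le.trans hac) _
        · exact Real.rpow_le_rpow ha.le hac (by linarith)
        · exact Real.rpow_le_rpow ha.le (hab i hi) (hw i hi)

theorem Real.rpow_sub_sum_mul_prod_rpow_mul_rpow {ι : Type*} (s : Finset ι) {a b : ℝ}
    (ha : 0 < a) (hb : 0 < b) (n : ℕ) (w : ι → ℝ) :
    b ^ ((n : ℝ) - ∑ i ∈ s, w i) * ∏ i ∈ s, (a ^ (1 - w i) * b ^ w i)
      = a ^ ((s.card : ℝ) - ∑ i ∈ s, w i) * b ^ n := by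
  rw [Finset.prod_mul_distrib, ← Real.rpow_sum_of_pos ha, ← Real.rpow_sum_of_pos hb,
    Finset.sum_sub_distrib, Finset.sum_const, nsmul_eq_mul, mul_one, mul_left_comm,
    ← Real.rpow_add hb, sub_add_cancel, Real.rpow_natCast]

@[to_additive]
theorem Finset.prod_prod_filter_mem_eq_prod_filter_nonempty {α ι M : Type*} [DecidableEq α]
    [CommMonoid M] (A : Finset α) (T : Finset ι) (sch : ι → Finset α)
    (hT : ∀ i ∈ T, (sch i ∩ A).card ≤ 1) (g : ι → M) :
    ∏ a ∈ A, ∏ i ∈ T with a ∈ sch i, g i = ∏ i ∈ T with (sch i ∩ A).Nonempty, g i := by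
  rw [← Finset.prod_biUnion]
  · congr 1
    ext i
    simp only [Finset.mem_biUnion, Finset.mem_filter, Finset.Nonempty, Finset.mem_inter]
    tauto
  · intro a ha b hb hab
    refine Finset.disjoint_left.mpr fun i hia hib => hab ?_
    rw [Finset.mem_filter] at hia hib
    exact Finset.card_le_one.mp (hT i hia.1) a (Finset.mem_inter.mpr ⟨hia.2, ha⟩) b
      (Finset.mem_inter.mpr ⟨hib.2, hb⟩)

namespace BinaryJoins

variable {att dom : Type}

/-- Both `config` and `JoinIso` are sets of this form. -/
def tuplesIn (J : Finset att) (P : att → dom → Prop) : Set (Tup att dom) :=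
  { u | IsTupleOn u ↑J ∧ ∀ X ∈ J, ∀ x : dom, u X = some x → P X x }

section Sizes

variable {Q : Finset (Relation att dom)} {R : Relation att dom} {lam : ℕ}

theorem ncard_le_inputSize (hR : R ∈ Q) : R.tuples.ncard ≤ inputSize Q :=
  Finset.single_le_sum (f := fun S => S.tuples.ncard) (fun _ _ => Nat.zero_le _) hR

theorem sum_ncard_fiber_le (R : Relation att dom) (Z : att) (s : Finset dom) :
    ∑ x ∈ s, {w ∈ R.tuples | w Z = some x}.ncard ≤ R.tuples.ncard := by
  have hfiber : ∀ x, {w ∈ R.tuples | w Z = some x}.ncard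
      = (R.finite.toFinset.filter fun w => w Z = some x).card := fun x => by
    rw [← Set.ncard_coe_finset]
    congr 1
    ext w
    simp
  calc ∑ x ∈ s, {w ∈ R.tuples | w Z = some x}.ncard
      = ∑ o ∈ s.image some, (R.finite.toFinset.filter fun w => w Z = o).card := by
        rw [Finset.sum_image fun _ _ _ _ h => Option.some_injective _ h]
        exact Finset.sum_congr rfl fun x _ => hfiber x
    _ ≤ R.finite.toFinset.card := by
        rw [Finset.sum_card_fiberwise_eq_card_filter]
        exact Finset.card_filter_le _ _
    _ = R.tuples.ncard := (Set.ncard_eq_toFinset_card _ R.finite).symm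

theorem heavyOn_finite (hlam : 0 < lam) (hm : 0 < inputSize Q) (Z : att) :
    {x | HeavyOn Q lam Z x}.Finite := by
  refine ((Set.Finite.biUnion Q.finite_toSet fun R _ => R.finite.image (· Z)).preimage
    (Option.some_injective dom).injOn).subset fun x ⟨R, hR, _, hge⟩ => ?_
  have hpos : (0 : ℝ) < (inputSize Q : ℝ) / lam := by positivity
  obtain ⟨w, hw, hwZ⟩ := Set.nonempty_of_ncard_ne_zero (s := {u ∈ R.tuples | u Z = some x})
    (by exact_mod_cast (hpos.trans_le hge).ne')
  exact Set.mem_biUnion hR ⟨w, hw, hwZ⟩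

/-- Each heavy value on `Z` accounts for at least `m / λ` of the `m` tuples. -/
theorem card_le_of_forall_heavyOn (hlam : 0 < lam) (hm : 0 < inputSize Q) {Z : att}
    (s : Finset dom) (hs : ∀ x ∈ s, HeavyOn Q lam Z x) : (s.card : ℝ) ≤ lam := by
  have hcount : (s.card : ℝ) * ((inputSize Q : ℝ) / lam) ≤ inputSize Q :=
    calc (s.card : ℝ) * ((inputSize Q : ℝ) / lam)
        ≤ ∑ x ∈ s, ∑ R ∈ Q, ({u ∈ R.tuples | u Z = some x}.ncard : ℝ) := by
          rw [← nsmul_eq_mul]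
          refine Finset.card_nsmul_le_sum s
            (fun x => ∑ R ∈ Q, ({u ∈ R.tuples | u Z = some x}.ncard : ℝ)) _ fun x hx => ?_
          obtain ⟨R, hR, -, hge⟩ := hs x hx
          have hle := Finset.single_le_sum
            (f := fun R => ({u ∈ R.tuples | u Z = some x}.ncard : ℝ))
            (fun _ _ => Nat.cast_nonneg _) hR
          exact hge.trans hle
      _ = ∑ R ∈ Q, ((∑ x ∈ s, {u ∈ R.tuples | u Z = some x}.ncard : ℕ) : ℝ) := by
          rw [Finset.sum_comm]
          push_cast
          rfl
      _ ≤ ∑ R ∈ Q, (R.tuples.ncard : ℝ) :=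
          Finset.sum_le_sum fun R _ => by exact_mod_cast sum_ncard_fiber_le R Z s
      _ = inputSize Q := by rw [inputSize, Nat.cast_sum]
  have hmR : (0 : ℝ) < inputSize Q := by exact_mod_cast hm
  rw [mul_div_assoc', div_le_iff₀ (by exact_mod_cast hlam), mul_comm] at hcount
  exact le_of_mul_le_mul_left hcount hmR

end Sizes

variable [DecidableEq att]

def tupleOf (J : Finset att) (f : ∀ X ∈ J, dom) : Tup att dom :=
  fun X => if h : X ∈ J then some (f X h) else none

theorem tupleOf_injective (J : Finset att) : Function.Injective (tupleOf (dom := dom) J) := by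
  intro f g h
  funext X hX
  simpa [tupleOf, hX] using congrFun h X

theorem tuplesIn_eq_image_pi {J : Finset att} {P : att → dom → Prop} {S : att → Finset dom}
    (hS : ∀ X ∈ J, ∀ x, P X x ↔ x ∈ S X) :
    tuplesIn J P = tupleOf J '' ↑(J.pi S) := by
  ext u
  constructor
  · rintro ⟨hu, hP⟩
    have hsome : ∀ X ∈ J, (u X).isSome := fun X hX => (hu X).mpr hX
    refine ⟨fun X hX => (u X).get (hsome X hX), Finset.mem_pi.mpr fun X hX => ?_, ?_⟩
    · exact (hS X hX _).mp (hP X hX _ (Option.some_get _).symm)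
    · funext X
      by_cases hX : X ∈ J
      · simp [tupleOf, hX]
      · simp only [tupleOf, hX, dite_false]
        exact (Option.not_isSome_iff_eq_none.mp (mt (hu X).mp hX)).symm
  · rintro ⟨f, hf, rfl⟩
    refine ⟨fun X => by by_cases hX : X ∈ J <;> simp [tupleOf, hX], fun X hX x hx => ?_⟩
    obtain rfl : f X hX = x := by simpa [tupleOf, hX] using hx
    exact (hS X hX _).mpr (Finset.mem_pi.mp hf X hX)

theorem ncard_tuplesIn {J : Finset att} {P : att → dom → Prop}
    (hP : ∀ X ∈ J, {x | P X x}.Finite) :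
    (tuplesIn J P).ncard = ∏ X ∈ J, {x | P X x}.ncard := by
  have hS : ∀ X, ∃ S : Finset dom, X ∈ J → ∀ x, P X x ↔ x ∈ S := fun X => by
    by_cases hX : X ∈ J
    · exact ⟨(hP X hX).toFinset, fun _ x => (Set.Finite.mem_toFinset _).symm⟩
    · exact ⟨∅, fun h => absurd h hX⟩
  choose S hS using hS
  rw [tuplesIn_eq_image_pi hS, Set.ncard_image_of_injective _ (tupleOf_injective J),
    Set.ncard_coe_finset, Finset.card_pi]
  refine Finset.prod_congr rfl fun X hX => ?_
  rw [← Set.ncard_coe_finset]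
  congr 1
  ext x
  exact (hS X hX x).symm

theorem sum_pi_prod_tupleOf {β : Type*} [CommSemiring β] (J : Finset att) (S : att → Finset dom)
    (g : att → Option dom → β) :
    ∑ f ∈ J.pi S, ∏ X ∈ J, g X (tupleOf J f X) = ∏ X ∈ J, ∑ x ∈ S X, g X (some x) := by
  rw [Finset.prod_sum]
  refine Finset.sum_congr rfl fun f _ => ?_
  rw [← Finset.prod_attach]
  exact Finset.prod_congr rfl fun X _ => by simp [tupleOf, X.2]

section Residual

variable {Q : Finset (Relation att dom)} {Hv : att → dom → Prop} {H : Finset att}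
  {η : Tup att dom} {R : Relation att dom}

theorem residualTuples_subset_image :
    ResidualTuples Q Hv H η R
      ⊆ (restrict · ↑(R.scheme \ H)) '' {w ∈ R.tuples | ∀ X ∈ R.scheme ∩ H, w X = η X} := by
  rintro v ⟨w, hw, hη, -, rfl⟩
  exact ⟨w, ⟨hw, hη⟩, rfl⟩

theorem ncard_residualTuples_le : (ResidualTuples Q Hv H η R).ncard ≤ R.tuples.ncard :=
  calc (ResidualTuples Q Hv H η R).ncard
      ≤ {w ∈ R.tuples | ∀ X ∈ R.scheme ∩ H, w X = η X}.ncard :=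
        (Set.ncard_le_ncard residualTuples_subset_image ((R.finite.subset
          (Set.sep_subset _ _)).image _)).trans (Set.ncard_image_le (R.finite.subset
          (Set.sep_subset _ _)))
    _ ≤ R.tuples.ncard := Set.ncard_le_ncard (Set.sep_subset _ _) R.finite

theorem ncard_residualTuples_le_fiber {Z : att} (hZ : Z ∈ R.scheme ∩ H) :
    (ResidualTuples Q Hv H η R).ncard ≤ {w ∈ R.tuples | w Z = η Z}.ncard := by
  have hfin : {w ∈ R.tuples | w Z = η Z}.Finite := R.finite.subset (Set.sep_subset _ _)
  calc (ResidualTuples Q Hv H η R).ncard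
      ≤ ((restrict · ↑(R.scheme \ H)) '' {w ∈ R.tuples | w Z = η Z}).ncard :=
        Set.ncard_le_ncard (residualTuples_subset_image.trans (Set.image_mono
          fun w hw => ⟨hw.1, hw.2 Z hZ⟩)) (hfin.image _)
    _ ≤ {w ∈ R.tuples | w Z = η Z}.ncard := Set.ncard_image_le hfin

theorem ncard_rpp_le_ncard_residualTuples {X : att} (hc : IsCross H R.scheme)
    (hR : R ∈ Q) (hXR : X ∈ R.scheme) :
    (Rpp Q Hv H η X).Finite ∧ (Rpp Q Hv H η X).ncard ≤ (ResidualTuples Q Hv H η R).ncard := by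
  have hmaps : Set.MapsTo (singletonTup X) (Rpp Q Hv H η X) (ResidualTuples Q Hv H η R) :=
    fun x hx => hx R hR hc hXR
  have hinj : Function.Injective (singletonTup (dom := dom) X) := fun x y h => by
    simpa [singletonTup] using congrFun h X
  have hfin : (ResidualTuples Q Hv H η R).Finite :=
    ((R.finite.subset (Set.sep_subset _ _)).image _).subset residualTuples_subset_image
  exact ⟨hfin.of_injOn hmaps hinj.injOn, Set.ncard_le_ncard_of_injOn _ hmaps hinj.injOn hfin⟩

end Residual

section Isolated

variable {Q : Finset (Relation att dom)} {H : Finset att} {R : Relation att dom} {X : att}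

/-- For a binary query, these are the cross edges `{X, Z}` with `X ∈ I` and `Z ∈ H`. -/
def isolatedRels (Q : Finset (Relation att dom)) (H : Finset att) : Finset (Relation att dom) :=
  Q.filter fun R => (R.scheme ∩ isolatedSet Q H).Nonempty

theorem scheme_sdiff_eq_of_mem_isolatedSet (hX : X ∈ isolatedSet Q H) (hR : R ∈ Q)
    (hXR : X ∈ R.scheme) : R.scheme \ H = {X} :=
  (Finset.mem_filter.mp hX).2 R hR hXR

theorem card_scheme_inter_isolatedSet_le_one (hR : R ∈ Q) :
    (R.scheme ∩ isolatedSet Q H).card ≤ 1 := by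
  refine Finset.card_le_one.mpr fun X hX Y hY => ?_
  rw [Finset.mem_inter] at hX hY
  have hY' : Y ∈ R.scheme \ H :=
    Finset.mem_sdiff.mpr ⟨hY.1, (Finset.mem_sdiff.mp (Finset.mem_filter.mp hY.2).1).2⟩
  rw [scheme_sdiff_eq_of_mem_isolatedSet hX.2 hR hX.1] at hY'
  exact (Finset.mem_singleton.mp hY').symm

theorem card_scheme_inter_eq_one_of_mem_isolatedSet (hB : BinaryQ Q)
    (hX : X ∈ isolatedSet Q H) (hR : R ∈ Q) (hXR : X ∈ R.scheme) :
    (R.scheme ∩ H).card = 1 := by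
  have h := Finset.card_sdiff_add_card_inter R.scheme H
  rw [scheme_sdiff_eq_of_mem_isolatedSet hX hR hXR, hB R hR, Finset.card_singleton] at h
  omega

theorem isCross_of_mem_isolatedSet (hB : BinaryQ Q) (hX : X ∈ isolatedSet Q H) (hR : R ∈ Q)
    (hXR : X ∈ R.scheme) : IsCross H R.scheme := by
  refine ⟨Finset.card_pos.mp ?_, ?_⟩
  · rw [card_scheme_inter_eq_one_of_mem_isolatedSet hB hX hR hXR]
    exact Nat.one_pos
  · rw [scheme_sdiff_eq_of_mem_isolatedSet hX hR hXR]
    exact Finset.singleton_nonempty X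

@[to_additive]
theorem prod_isolatedSet_prod_eq_prod_isolatedRels {M : Type*} [CommMonoid M]
    (g : Relation att dom → M) :
    ∏ X ∈ isolatedSet Q H, ∏ R ∈ Q with X ∈ R.scheme, g R = ∏ R ∈ isolatedRels Q H, g R :=
  Finset.prod_prod_filter_mem_eq_prod_filter_nonempty _ _ _
    (fun _ hR => card_scheme_inter_isolatedSet_le_one hR) g

@[to_additive]
theorem prod_prod_isolatedRels_eq_prod_isolatedRels {M : Type*} [CommMonoid M] (hB : BinaryQ Q)
    (g : Relation att dom → M) :
    ∏ Z ∈ H, ∏ R ∈ isolatedRels Q H with Z ∈ R.scheme, g R = ∏ R ∈ isolatedRels Q H, g R := by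
  have hone : ∀ R ∈ isolatedRels Q H, (R.scheme ∩ H).card = 1 := fun R hR => by
    obtain ⟨hRQ, X, hX⟩ := Finset.mem_filter.mp hR
    rw [Finset.mem_inter] at hX
    exact card_scheme_inter_eq_one_of_mem_isolatedSet hB hX.2 hRQ hX.1
  rw [Finset.prod_prod_filter_mem_eq_prod_filter_nonempty _ _ _ fun R hR => (hone R hR).le,
    Finset.filter_true_of_mem fun R hR => Finset.card_pos.mp (by rw [hone R hR]; exact one_pos)]

end Isolated

section Weights

variable {Q : Finset (Relation att dom)} {W : Finset att → ℝ}

theorem vertexWeight_edgeSet (hS : SimpleQ Q) (W : Finset att → ℝ) (X : att) :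
    vertexWeight (edgeSet Q) W X = ∑ R ∈ Q with X ∈ R.scheme, W R.scheme := by
  rw [vertexWeight, edgeSet, Finset.filter_image, Finset.sum_image]
  exact fun R hR S hS' h => hS R (Finset.mem_filter.mp hR).1 S (Finset.mem_filter.mp hS').1 h

theorem IsFracEdgePack.weight_nonneg (hW : IsFracEdgePack (attset Q) (edgeSet Q) W)
    {R : Relation att dom} (hR : R ∈ Q) : 0 ≤ W R.scheme :=
  (hW.1 R.scheme (Finset.mem_image_of_mem _ hR)).1

def isolatedWeight (Q : Finset (Relation att dom)) (H : Finset att) (W : Finset att → ℝ)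
    (Z : att) : ℝ :=
  ∑ R ∈ isolatedRels Q H with Z ∈ R.scheme, W R.scheme

theorem sum_vertexWeight_isolatedSet (hS : SimpleQ Q) (hB : BinaryQ Q) (H : Finset att)
    (W : Finset att → ℝ) :
    ∑ Y ∈ isolatedSet Q H, vertexWeight (edgeSet Q) W Y = ∑ Z ∈ H, isolatedWeight Q H W Z := by
  simp only [vertexWeight_edgeSet hS, isolatedWeight]
  rw [sum_isolatedSet_sum_eq_sum_isolatedRels, sum_sum_isolatedRels_eq_sum_isolatedRels hB]

theorem isolatedWeight_le_one (hS : SimpleQ Q) (hW : IsFracEdgePack (attset Q) (edgeSet Q) W)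
    (H : Finset att) {Z : att} (hZ : Z ∈ attset Q) : isolatedWeight Q H W Z ≤ 1 := by
  refine le_trans ?_ ((vertexWeight_edgeSet hS W Z).symm.trans_le (hW.2 Z hZ))
  exact Finset.sum_le_sum_of_subset_of_nonneg (Finset.filter_subset_filter _
    (Finset.filter_subset _ _)) fun R hR _ => hW.weight_nonneg (Finset.mem_filter.mp hR).1

end Weights

section Bounds

variable {Q : Finset (Relation att dom)} {Hv : att → dom → Prop} {H : Finset att}
  {W : Finset att → ℝ}

theorem mem_attset_of_mem_isolatedSet {X : att} (hX : X ∈ isolatedSet Q H) : X ∈ attset Q :=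
  (Finset.mem_sdiff.mp (Finset.mem_filter.mp hX).1).1

/-- `|R''_X(η)|` is at most `m` and at most `|R'_e(η)|` for every edge `e ∋ X`; interpolate. -/
theorem ncard_rpp_le (hS : SimpleQ Q) (hB : BinaryQ Q)
    (hW : IsFracEdgePack (attset Q) (edgeSet Q) W) {X : att} (hX : X ∈ isolatedSet Q H)
    (η : Tup att dom) :
    ((Rpp Q Hv H η X).ncard : ℝ)
      ≤ (inputSize Q : ℝ) ^ (1 - vertexWeight (edgeSet Q) W X)
        * ∏ R ∈ Q with X ∈ R.scheme, ((ResidualTuples Q Hv H η R).ncard : ℝ) ^ W R.scheme := by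
  obtain ⟨R₀, hR₀, hXR₀⟩ := Finset.mem_biUnion.mp (mem_attset_of_mem_isolatedSet hX)
  have hres := fun {R} (hR : R ∈ Q) (hXR : X ∈ R.scheme) =>
    ncard_rpp_le_ncard_residualTuples (Hv := Hv) (η := η)
      (isCross_of_mem_isolatedSet hB hX hR hXR) hR hXR
  have hw1 := hW.2 X (mem_attset_of_mem_isolatedSet hX)
  rw [vertexWeight_edgeSet hS] at hw1 ⊢
  refine Real.le_rpow_mul_prod_rpow (Nat.cast_nonneg _) ?_ (fun R hR => ?_)
    (fun R hR => hW.weight_nonneg (Finset.mem_filter.mp hR).1) hw1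
  · exact_mod_cast (hres hR₀ hXR₀).2.trans
      (ncard_residualTuples_le.trans (ncard_le_inputSize hR₀))
  · rw [Finset.mem_filter] at hR
    exact_mod_cast (hres hR.1 hR.2).2

theorem rpp_finite (hB : BinaryQ Q) {X : att} (hX : X ∈ isolatedSet Q H) (η : Tup att dom) :
    (Rpp Q Hv H η X).Finite := by
  obtain ⟨R, hR, hXR⟩ := Finset.mem_biUnion.mp (mem_attset_of_mem_isolatedSet hX)
  exact (ncard_rpp_le_ncard_residualTuples (isCross_of_mem_isolatedSet hB hX hR hXR) hR hXR).1

/-- The factor of `Z ∈ H` in the bound for a configuration `η`, evaluated at `o = η(Z)`. -/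
noncomputable def degreeProduct (Q : Finset (Relation att dom)) (H : Finset att)
    (W : Finset att → ℝ) (Z : att) (o : Option dom) : ℝ :=
  ∏ R ∈ isolatedRels Q H with Z ∈ R.scheme, ({w ∈ R.tuples | w Z = o}.ncard : ℝ) ^ W R.scheme

theorem degreeProduct_nonneg (Z : att) (o : Option dom) : 0 ≤ degreeProduct Q H W Z o :=
  Finset.prod_nonneg fun _ _ => Real.rpow_nonneg (Nat.cast_nonneg _) _

theorem ncard_joinIso_le (hS : SimpleQ Q) (hB : BinaryQ Q)
    (hW : IsFracEdgePack (attset Q) (edgeSet Q) W) (η : Tup att dom) :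
    ((JoinIso Q Hv H η (isolatedSet Q H)).ncard : ℝ)
      ≤ (inputSize Q : ℝ) ^ (((isolatedSet Q H).card : ℝ) - ∑ Z ∈ H, isolatedWeight Q H W Z)
        * ∏ Z ∈ H, degreeProduct Q H W Z (η Z) := by
  have hvw : ∀ X ∈ isolatedSet Q H, 0 ≤ 1 - vertexWeight (edgeSet Q) W X := fun X hX =>
    sub_nonneg.mpr (hW.2 X (mem_attset_of_mem_isolatedSet hX))
  calc ((JoinIso Q Hv H η (isolatedSet Q H)).ncard : ℝ)
      = ∏ X ∈ isolatedSet Q H, ((Rpp Q Hv H η X).ncard : ℝ) := by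
        rw [show JoinIso Q Hv H η (isolatedSet Q H)
            = tuplesIn (isolatedSet Q H) (fun X x => x ∈ Rpp Q Hv H η X) from rfl,
          ncard_tuplesIn (P := fun X x => x ∈ Rpp Q Hv H η X) fun X hX => rpp_finite hB hX η]
        simp only [Set.ofPred_mem_eq, Nat.cast_prod]
    _ ≤ ∏ X ∈ isolatedSet Q H, ((inputSize Q : ℝ) ^ (1 - vertexWeight (edgeSet Q) W X)
          * ∏ R ∈ Q with X ∈ R.scheme,
              ((ResidualTuples Q Hv H η R).ncard : ℝ) ^ W R.scheme) :=
        Finset.prod_le_prod (fun _ _ => Nat.cast_nonneg _)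
          fun X hX => ncard_rpp_le hS hB hW hX η
    _ = (inputSize Q : ℝ) ^ (((isolatedSet Q H).card : ℝ) - ∑ Z ∈ H, isolatedWeight Q H W Z)
          * ∏ Z ∈ H, ∏ R ∈ isolatedRels Q H with Z ∈ R.scheme,
              ((ResidualTuples Q Hv H η R).ncard : ℝ) ^ W R.scheme := by
        rw [Finset.prod_mul_distrib, ← Real.rpow_sum_of_nonneg (Nat.cast_nonneg _) hvw,
          prod_isolatedSet_prod_eq_prod_isolatedRels,
          prod_prod_isolatedRels_eq_prod_isolatedRels hB,
          Finset.sum_sub_distrib, Finset.sum_const, nsmul_eq_mul, mul_one,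
          sum_vertexWeight_isolatedSet hS hB]
    _ ≤ _ := by
        refine mul_le_mul_of_nonneg_left (Finset.prod_le_prod
          (fun _ _ => Finset.prod_nonneg fun _ _ => Real.rpow_nonneg (Nat.cast_nonneg _) _)
          fun Z hZ => Finset.prod_le_prod (fun _ _ => Real.rpow_nonneg (Nat.cast_nonneg _) _)
            fun R hR => ?_) (Real.rpow_nonneg (Nat.cast_nonneg _) _)
        rw [Finset.mem_filter] at hR
        exact Real.rpow_le_rpow (Nat.cast_nonneg _)
          (by exact_mod_cast ncard_residualTuples_le_fiber (Finset.mem_inter.mpr ⟨hR.2, hZ⟩))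
          (hW.weight_nonneg (Finset.mem_filter.mp hR.1).1)

/-- Hölder's inequality over the values `z ∈ s`, whose fibres in each relation have total size at
most `m`. -/
theorem sum_degreeProduct_le (hS : SimpleQ Q) (hW : IsFracEdgePack (attset Q) (edgeSet Q) W)
    {Z : att} (hZ : Z ∈ attset Q) {s : Finset dom} {c : ℝ} (hs : (s.card : ℝ) ≤ c) :
    ∑ z ∈ s, degreeProduct Q H W Z (some z)
      ≤ c ^ (1 - isolatedWeight Q H W Z) * (inputSize Q : ℝ) ^ isolatedWeight Q H W Z := by
  have hW0 : ∀ R ∈ (isolatedRels Q H).filter (Z ∈ ·.scheme), 0 ≤ W R.scheme := fun R hR =>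
    hW.weight_nonneg (Finset.mem_filter.mp (Finset.mem_filter.mp hR).1).1
  refine (Real.sum_prod_rpow_le_card_rpow_mul_prod_sum_rpow _ s hW0
    (isolatedWeight_le_one hS hW H hZ) fun _ _ _ _ => Nat.cast_nonneg _).trans ?_
  have hF : ∀ R : Relation att dom, 0 ≤ ∑ z ∈ s, ({w ∈ R.tuples | w Z = some z}.ncard : ℝ) :=
    fun _ => Finset.sum_nonneg fun _ _ => Nat.cast_nonneg _
  rw [isolatedWeight, Real.rpow_sum_of_nonneg (Nat.cast_nonneg _) hW0]
  refine mul_le_mul (Real.rpow_le_rpow (Nat.cast_nonneg _) hs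
      (sub_nonneg.mpr (isolatedWeight_le_one hS hW H hZ)))
    (Finset.prod_le_prod (fun R _ => Real.rpow_nonneg (hF R) _)
      fun R hR => Real.rpow_le_rpow (hF R) ?_ (hW0 R hR))
    (Finset.prod_nonneg fun R _ => Real.rpow_nonneg (hF R) _)
    (Real.rpow_nonneg ((Nat.cast_nonneg _).trans hs) _)
  exact_mod_cast (sum_ncard_fiber_le R Z s).trans
    (ncard_le_inputSize (Finset.mem_filter.mp (Finset.mem_filter.mp hR).1).1)

end Bounds

theorem isolated_cartesian_product_general
    (Q : Finset (Relation att dom)) (hS : SimpleQ Q) (hB : BinaryQ Q)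
    (lam : ℕ) (hlam1 : 1 ≤ lam) (hlam2 : lam ≤ inputSize Q)
    (H : Finset att) (hH : H ⊆ attset Q)
    (W : Finset att → ℝ) (hW : IsFracEdgePack (attset Q) (edgeSet Q) W) :
    (∑ᶠ η ∈ config (HeavyOn Q lam) H,
        ((JoinIso Q (HeavyOn Q lam) H η (isolatedSet Q H)).ncard : ℝ))
      ≤ (lam : ℝ)
            ^ ((H.card : ℝ)
                - ∑ Y ∈ isolatedSet Q H, vertexWeight (edgeSet Q) W Y)
          * (inputSize Q : ℝ) ^ (isolatedSet Q H).card := by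
  have hm : 0 < inputSize Q := Nat.lt_of_lt_of_le hlam1 hlam2
  have hheavy := heavyOn_finite hlam1 hm
  set m : ℝ := (inputSize Q : ℝ)
  set e : ℝ := ((isolatedSet Q H).card : ℝ) - ∑ Z ∈ H, isolatedWeight Q H W Z
  rw [show config (HeavyOn Q lam) H = tuplesIn H (HeavyOn Q lam) from rfl,
    tuplesIn_eq_image_pi (P := HeavyOn Q lam) (S := fun Z => (hheavy Z).toFinset)
      fun Z _ _ => (hheavy Z).mem_toFinset.symm,
    finsum_mem_image (tupleOf_injective H).injOn, finsum_mem_coe_finset,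
    sum_vertexWeight_isolatedSet hS hB]
  calc _ ≤ ∑ f ∈ H.pi fun Z => (hheavy Z).toFinset,
          m ^ e * ∏ Z ∈ H, degreeProduct Q H W Z (tupleOf H f Z) :=
        Finset.sum_le_sum fun f _ => ncard_joinIso_le hS hB hW _
    _ = m ^ e * ∏ Z ∈ H, ∑ z ∈ (hheavy Z).toFinset, degreeProduct Q H W Z (some z) := by
        rw [← Finset.mul_sum, sum_pi_prod_tupleOf H _ (degreeProduct Q H W)]
    _ ≤ m ^ e * ∏ Z ∈ H,
          ((lam : ℝ) ^ (1 - isolatedWeight Q H W Z) * m ^ isolatedWeight Q H W Z) := by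
        gcongr with Z hZ
        · exact fun Z _ => Finset.sum_nonneg fun z _ => degreeProduct_nonneg Z (some z)
        · exact sum_degreeProduct_le hS hW (hH hZ)
            (card_le_of_forall_heavyOn hlam1 hm _ fun x hx => (hheavy Z).mem_toFinset.mp hx)
    _ = _ := Real.rpow_sub_sum_mul_prod_rpow_mul_rpow H (Nat.cast_pos.mpr hlam1)
        (Nat.cast_pos.mpr hm) _ _

/-- **the isolated cartesian product theorem.** Let `Q` be a
simple binary join query of total input size `m`, `H ⊆ attset Q`, `I` the
set of isolated attributes, and `W` a fractional edge packing of the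
hypergraph of `Q`.  Then
`Σ_{η ∈ config(Q,H)} |Join(Q''_isolated(η))| ≤ λ^{|H| − W_I} · m^{|I|}`. -/
theorem isolated_cartesian_product [Finite att] [Countable dom] [Infinite dom]
    (Q : Finset (Relation att dom)) (hS : SimpleQ Q) (hB : BinaryQ Q)
    (lam : ℕ) (hlam1 : 1 ≤ lam) (hlam2 : lam ≤ inputSize Q)
    (H : Finset att) (hH : H ⊆ attset Q)
    (W : Finset att → ℝ) (hW : IsFracEdgePack (attset Q) (edgeSet Q) W) :
    (∑ᶠ η ∈ config (HeavyOn Q lam) H,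
        ((JoinIso Q (HeavyOn Q lam) H η (isolatedSet Q H)).ncard : ℝ))
      ≤ (lam : ℝ)
            ^ ((H.card : ℝ)
                - ∑ Y ∈ isolatedSet Q H, vertexWeight (edgeSet Q) W Y)
          * (inputSize Q : ℝ) ^ (isolatedSet Q H).card :=
  isolated_cartesian_product_general Q hS hB lam hlam1 hlam2 H hH W hW

end BinaryJoins
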